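/- Let f : ℝⁿ → ℝ be twice continuously differentiable on an open set containing the line segment 𝒳_{a,b} = { xₐ + γ(x_b − xₐ) : γ ∈ [0,1] } between two points xₐ, x_b ∈ ℝⁿ, and suppose that for all x ∈ 𝒳_{a,b} and all i, j = 1,…,n one has M̲ᵢⱼ^{a,b} < ∂²f/∂xⱼ∂xᵢ(x) < M̄ᵢⱼ^{a,b}. Then f(x_b) − f(xₐ) ≥ ∇f(xₐ)ᵀ(x_b − xₐ) + (1/2) Σᵢ₌₁ⁿ Σⱼ₌₁ⁿ min( M̲ᵢⱼ^{a,b} (x_{b,i} − x_{a,i})(x_{b,j} − x_{a,j}), M̄ᵢⱼ^{a,b} (x_{b,i} − x_{a,i})(x_{b,j} − x_{a,j}) ) and f(x_b) − f(xₐ) ≤ ∇f(xₐ)ᵀ(x_b − xₐ) + (1/2) Σᵢ₌₁ⁿ Σⱼ₌₁ⁿ max( M̲ᵢⱼ^{a,b} (x_{b,i} − x_{a,i})(x_{b,j} − x_{a,j}), M̄ᵢⱼ^{a,b} (x_{b,i} − x_{a,i})(x_{b,j} − x_{a,j}) ). -/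

import Mathlib

open Finset

/-- The partial derivative ∂f/∂xᵢ of `f : ℝⁿ → ℝ` at `x`. -/
noncomputable def pderiv1 {n : ℕ} (f : (Fin n → ℝ) → ℝ) (i : Fin n) (x : Fin n → ℝ) : ℝ :=
  fderiv ℝ f x (Pi.single i 1)

/-- The second partial derivative ∂²f/∂xⱼ∂xᵢ of `f : ℝⁿ → ℝ` at `x`. -/
noncomputable def pderiv2 {n : ℕ} (f : (Fin n → ℝ) → ℝ) (i j : Fin n) (x : Fin n → ℝ) : ℝ :=
  pderiv1 (pderiv1 f i) j x

/-! Along the segment, `g t = f (xa + t • d)` with `d = xb - xa` has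
`g'' t = ∑ i, ∑ j, ∂²f/∂xⱼ∂xᵢ (xa + t • d) * (dᵢ * dⱼ)`, so the entrywise bounds on the Hessian give
`m ≤ g'' ≤ M` on `[0, 1]` for the two double sums `m`, `M` of the statement. Integrating twice
(as monotonicity of `g' t - m t` and then of `g t - g' 0 t - m t² / 2`) yields
`m / 2 ≤ g 1 - g 0 - g' 0 ≤ M / 2`. -/

open Set

theorem nonneg_of_hasDerivAt_nonneg {h h' : ℝ → ℝ} {a b : ℝ}
    (hd : ∀ t ∈ Icc a b, HasDerivAt h (h' t) t) (hnn : ∀ t ∈ Icc a b, 0 ≤ h' t) (ha : h a = 0) :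
    ∀ t ∈ Icc a b, 0 ≤ h t := by
  have hmono : MonotoneOn h (Icc a b) :=
    monotoneOn_of_hasDerivWithinAt_nonneg (convex_Icc a b)
      (fun t ht => (hd t ht).continuousAt.continuousWithinAt)
      (fun t ht => (hd t (interior_subset ht)).hasDerivWithinAt)
      (fun t ht => hnn t (interior_subset ht))
  intro t ht
  exact ha ▸ hmono (left_mem_Icc.2 (ht.1.trans ht.2)) ht ht.1

theorem taylor_two_lower_of_le_deriv2 {g g' g'' : ℝ → ℝ} {a b m : ℝ} (hab : a ≤ b)
    (hg : ∀ t ∈ Icc a b, HasDerivAt g (g' t) t) (hg' : ∀ t ∈ Icc a b, HasDerivAt g' (g'' t) t)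
    (hm : ∀ t ∈ Icc a b, m ≤ g'' t) :
    g a + g' a * (b - a) + m / 2 * (b - a) ^ 2 ≤ g b := by
  have hslope : ∀ t ∈ Icc a b, 0 ≤ g' t - g' a - m * (t - a) :=
    nonneg_of_hasDerivAt_nonneg
      (fun t ht => by
        simpa using
          ((hg' t ht).sub_const (g' a)).fun_sub (((hasDerivAt_id t).sub_const a).const_mul m))
      (fun t ht => sub_nonneg.2 (hm t ht)) (by ring)
  have hremainder := nonneg_of_hasDerivAt_nonneg (a := a) (b := b)
    (h := fun t => g t - g a - g' a * (t - a) - m / 2 * (t - a) ^ 2)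
    (fun t ht => by
      refine ((((hg t ht).sub_const (g a)).fun_sub
        (((hasDerivAt_id' t).sub_const a).const_mul (g' a))).fun_sub
        ((((hasDerivAt_id' t).sub_const a).fun_pow 2).const_mul (m / 2))).congr_deriv ?_
      norm_num
      ring)
    hslope (by ring) b (right_mem_Icc.2 hab)
  linarith

theorem taylor_two_upper_of_deriv2_le {g g' g'' : ℝ → ℝ} {a b M : ℝ} (hab : a ≤ b)
    (hg : ∀ t ∈ Icc a b, HasDerivAt g (g' t) t) (hg' : ∀ t ∈ Icc a b, HasDerivAt g' (g'' t) t)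
    (hM : ∀ t ∈ Icc a b, g'' t ≤ M) :
    g b ≤ g a + g' a * (b - a) + M / 2 * (b - a) ^ 2 := by
  have := taylor_two_lower_of_le_deriv2 (g := -g) (g' := -g') (g'' := -g'') (m := -M) hab
    (fun t ht => (hg t ht).neg) (fun t ht => (hg' t ht).neg) (fun t ht => neg_le_neg (hM t ht))
  simp only [Pi.neg_apply] at this
  linarith

theorem min_mul_le_mul_of_le_of_le {l a u : ℝ} (hl : l ≤ a) (hu : a ≤ u) (p : ℝ) :
    min (l * p) (u * p) ≤ a * p := by
  rcases le_total 0 p with hp | hp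
  · exact (min_le_left _ _).trans (mul_le_mul_of_nonneg_right hl hp)
  · exact (min_le_right _ _).trans (mul_le_mul_of_nonpos_right hu hp)

theorem mul_le_max_mul_of_le_of_le {l a u : ℝ} (hl : l ≤ a) (hu : a ≤ u) (p : ℝ) :
    a * p ≤ max (l * p) (u * p) := by
  rcases le_total 0 p with hp | hp
  · exact (mul_le_mul_of_nonneg_right hu hp).trans (le_max_right _ _)
  · exact (mul_le_mul_of_nonpos_right hl hp).trans (le_max_left _ _)

section Partials

variable {n : ℕ} {F : (Fin n → ℝ) → ℝ}

theorem fderiv_apply_eq_sum_pderiv1 (x v : Fin n → ℝ) :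
    fderiv ℝ F x v = ∑ j, pderiv1 F j x * v j := by
  conv_lhs => rw [pi_eq_sum_univ' v]
  simp [pderiv1, mul_comm]

theorem hasDerivAt_comp_add_smul {x d : Fin n → ℝ} {t : ℝ}
    (hF : DifferentiableAt ℝ F (x + t • d)) :
    HasDerivAt (fun s : ℝ => F (x + s • d)) (∑ j, pderiv1 F j (x + t • d) * d j) t := by
  have hline : HasDerivAt (fun s : ℝ => x + s • d) d t := by
    simpa using ((hasDerivAt_id t).smul_const d).const_add x
  rw [← fderiv_apply_eq_sum_pderiv1]
  exact hF.hasFDerivAt.comp_hasDerivAt t hline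

theorem differentiableAt_pderiv1 {x : Fin n → ℝ} (hF : ContDiffAt ℝ 2 F x) (i : Fin n) :
    DifferentiableAt ℝ (pderiv1 F i) x :=
  ((hF.fderiv_right (m := 1) (by norm_num)).differentiableAt one_ne_zero).clm_apply
    (differentiableAt_const _)

end Partials

theorem quadratic_bounds_local {n : ℕ} (f : (Fin n → ℝ) → ℝ)
    (xa xb : Fin n → ℝ) (U : Set (Fin n → ℝ))
    (hU : IsOpen U) (hsegU : segment ℝ xa xb ⊆ U)
    (hf : ContDiffOn ℝ 2 f U)
    (Ml Mu : Fin n → Fin n → ℝ)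
    (hM : ∀ x ∈ segment ℝ xa xb, ∀ i j, Ml i j < pderiv2 f i j x ∧ pderiv2 f i j x < Mu i j) :
    f xb - f xa ≥ (∑ i, pderiv1 f i xa * (xb i - xa i)) +
      (1 / 2) * (∑ i, ∑ j, min (Ml i j * ((xb i - xa i) * (xb j - xa j)))
        (Mu i j * ((xb i - xa i) * (xb j - xa j)))) ∧
    f xb - f xa ≤ (∑ i, pderiv1 f i xa * (xb i - xa i)) +
      (1 / 2) * (∑ i, ∑ j, max (Ml i j * ((xb i - xa i) * (xb j - xa j)))
        (Mu i j * ((xb i - xa i) * (xb j - xa j)))) := by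
  have hseg : ∀ t ∈ Icc (0 : ℝ) 1, xa + t • (xb - xa) ∈ segment ℝ xa xb := fun t ht => by
    rw [segment_eq_image']
    exact ⟨t, ht, rfl⟩
  have hC2 : ∀ t ∈ Icc (0 : ℝ) 1, ContDiffAt ℝ 2 f (xa + t • (xb - xa)) := fun t ht =>
    hf.contDiffAt (hU.mem_nhds (hsegU (hseg t ht)))
  have hg : ∀ t ∈ Icc (0 : ℝ) 1, HasDerivAt (fun s : ℝ => f (xa + s • (xb - xa)))
      (∑ i, pderiv1 f i (xa + t • (xb - xa)) * (xb - xa) i) t := fun t ht =>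
    hasDerivAt_comp_add_smul ((hC2 t ht).differentiableAt (by norm_num))
  have hg' : ∀ t ∈ Icc (0 : ℝ) 1,
      HasDerivAt (fun s : ℝ => ∑ i, pderiv1 f i (xa + s • (xb - xa)) * (xb - xa) i)
        (∑ i, ∑ j, pderiv2 f i j (xa + t • (xb - xa)) * ((xb - xa) i * (xb - xa) j)) t := by
    intro t ht
    refine (HasDerivAt.fun_sum fun i _ =>
      (hasDerivAt_comp_add_smul (differentiableAt_pderiv1 (hC2 t ht) i)).mul_const _).congr_deriv ?_
    simp only [sum_mul, pderiv2]
    exact sum_congr rfl fun i _ => sum_congr rfl fun j _ => by ring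
  have lower := taylor_two_lower_of_le_deriv2 zero_le_one hg hg' fun t ht =>
    sum_le_sum fun i _ => sum_le_sum fun j _ =>
      min_mul_le_mul_of_le_of_le (hM _ (hseg t ht) i j).1.le (hM _ (hseg t ht) i j).2.le _
  have upper := taylor_two_upper_of_deriv2_le zero_le_one hg hg' fun t ht =>
    sum_le_sum fun i _ => sum_le_sum fun j _ =>
      mul_le_max_mul_of_le_of_le (hM _ (hseg t ht) i j).1.le (hM _ (hseg t ht) i j).2.le _
  simp only [zero_smul, add_zero, one_smul, add_sub_cancel, Pi.sub_apply] at lower upper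
  constructor <;> linarith
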